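/- arXiv:2502.03432 — 5 statements merged into one kernel-verified Lean document; each statement's English description precedes it below -/
import Mathlib

section
/- Every closed Gale-Stewart game is determined: if the payoff set P ⊆ [T] is closed in the body [T] (with its subspace topology from the product of discrete topologies), then either player 0 or player 1 has a winning strategy. -/
universe u

namespace GS

variable {A B C : Type u}

/-- A tree on `A`: a set of finite sequences closed under prefixes. -/
def IsTree (T : Set (List A)) : Prop := ∀ ⦃x y : List A⦄, x <+: y → y ∈ T → x ∈ T

/-- A tree is pruned if every node has a proper extension in the tree. -/
def IsPruned (T : Set (List A)) : Prop := ∀ x ∈ T, ∃ a : A, x ++ [a] ∈ T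

/-- The body of a tree: infinite sequences all of whose finite prefixes lie in the tree. -/
def body (T : Set (List A)) : Set (ℕ → A) :=
  {a | ∀ n : ℕ, (List.ofFn fun i : Fin n => a i) ∈ T}

/-- The product of the discrete topologies on `ℕ → A`. -/
def seqTop (A : Type u) : TopologicalSpace (ℕ → A) :=
  @Pi.topologicalSpace ℕ (fun _ => A) (fun _ => ⊥)

/-- The subspace topology on the body of a tree. -/
def bodyTop (T : Set (List A)) : TopologicalSpace {a // a ∈ body T} :=
  TopologicalSpace.induced Subtype.val (seqTop A)

/-- A (functional) strategy for player `i` on the tree `T`: to each position of player `i`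
(i.e. of length `≡ i (mod 2)`) in `T` it assigns a legal move. -/
structure Strategy (T : Set (List A)) (i : ℕ) where
  move : List A → A
  legal : ∀ x ∈ T, x.length % 2 = i % 2 → x ++ [move x] ∈ T

/-- A play is consistent with a strategy of player `i` if all moves of player `i` are
given by the strategy. -/
def Consistent {T : Set (List A)} {i : ℕ} (σ : Strategy T i) (a : ℕ → A) : Prop :=
  ∀ n : ℕ, n % 2 = i % 2 → a n = σ.move (List.ofFn fun j : Fin n => a j)

/-- The plays (branches of the tree) consistent with a strategy; this is the body `[σ]`
of the strategy tree of `σ`. -/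
def plays {T : Set (List A)} {i : ℕ} (σ : Strategy T i) : Set (ℕ → A) :=
  {a ∈ body T | Consistent σ a}

/-- A strategy of player `i` is winning in the game `(T, P)` if every play consistent with it
is won by player `i`. -/
def WinningStrategy (T : Set (List A)) (P : Set (ℕ → A)) {i : ℕ} (σ : Strategy T i) : Prop :=
  ∀ a ∈ plays σ, if i % 2 = 0 then a ∈ P else a ∉ P

/-- A game is determined if one of the two players has a winning strategy. -/
def Determined (T : Set (List A)) (P : Set (ℕ → A)) : Prop :=
  (∃ σ : Strategy T 0, WinningStrategy T P σ) ∨ ∃ σ : Strategy T 1, WinningStrategy T P σ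

/-- The strategy tree of a functional strategy: all positions reachable while player `i`
follows `σ`. -/
def stratTree (T : Set (List A)) (i : ℕ) (σ : Strategy T i) : Set (List A) :=
  {x ∈ T | ∀ (y : List A) (a : A), y ++ [a] <+: x → y.length % 2 = i % 2 → a = σ.move y}

/-- A morphism of trees: an isotone, length-preserving map. -/
structure TreeHom (S : Set (List A)) (T : Set (List B)) where
  toFun : List A → List B
  mem : ∀ x ∈ S, toFun x ∈ T
  len : ∀ x ∈ S, (toFun x).length = x.length
  mono : ∀ ⦃x y : List A⦄, x ∈ S → y ∈ S → x <+: y → toFun x <+: toFun y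

/-- The identity tree morphism. -/
def TreeHom.id (S : Set (List A)) : TreeHom S S where
  toFun := _root_.id
  mem _ hx := hx
  len _ _ := rfl
  mono _ _ _ _ h := h

/-- Composition of tree morphisms. -/
def TreeHom.comp {S : Set (List A)} {T : Set (List B)} {U : Set (List C)}
    (g : TreeHom T U) (f : TreeHom S T) : TreeHom S U where
  toFun := g.toFun ∘ f.toFun
  mem x hx := g.mem _ (f.mem x hx)
  len x hx := by simp only [Function.comp_apply, g.len _ (f.mem x hx), f.len x hx]
  mono x y hx hy hxy := g.mono (f.mem x hx) (f.mem y hy) (f.mono hx hy hxy)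

/-- The map induced on infinite branches by a length-preserving isotone map of trees. -/
def bodyMap [Inhabited B] (f : List A → List B) (a : ℕ → A) : ℕ → B :=
  fun n => (f (List.ofFn fun i : Fin (n + 1) => a i)).getD n default

/-- A covering of trees: a tree morphism `π` together with a map `φ` of strategies (of either
player) satisfying the locality condition and the branch lifting condition. -/
structure Covering [Inhabited A] (S : Set (List B)) (T : Set (List A)) where
  π : TreeHom S T
  φ : ∀ i : ℕ, Strategy S i → Strategy T i
  agree : ∀ (i n : ℕ) (σ σ' : Strategy S i),
    (∀ x ∈ S, x.length ≤ n → σ.move x = σ'.move x) →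
    ∀ x ∈ T, x.length ≤ n → (φ i σ).move x = (φ i σ').move x
  lift : ∀ (i : ℕ) (σ : Strategy S i), ∀ a ∈ plays (φ i σ),
    ∃ a' ∈ plays σ, bodyMap π.toFun a' = a

/-- A covering is `k`-fixing if `π` restricts to a bijection on the first `k` levels and `φ` is
induced by `π` there. -/
structure IsFixing [Inhabited A] {S : Set (List B)} {T : Set (List A)} (k : ℕ)
    (c : Covering S T) : Prop where
  bij : Function.Bijective fun x : {x : List B // x ∈ S ∧ x.length ≤ k} =>
    (⟨c.π.toFun x.1, c.π.mem _ x.2.1, by rw [c.π.len _ x.2.1]; exact x.2.2⟩ :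
      {x : List A // x ∈ T ∧ x.length ≤ k})
  induced : ∀ (i : ℕ) (σ : Strategy S i), ∀ x ∈ S, x.length < k → x.length % 2 = i % 2 →
    c.π.toFun (x ++ [σ.move x]) = c.π.toFun x ++ [(c.φ i σ).move (c.π.toFun x)]

/-- A game `(T, P)` is unravelable if for every `k` there is a `k`-fixing covering of `T` such
that the preimage of `P` is clopen in the body of the covering tree. -/
def Unravelable [Inhabited A] (T : Set (List A)) (P : Set (ℕ → A)) : Prop :=
  ∀ k : ℕ, ∃ (B : Type u) (S : Set (List B)) (c : Covering S T),
    IsTree S ∧ IsPruned S ∧ S.Nonempty ∧ IsFixing k c ∧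
    @IsClopen _ (bodyTop S) {a : {a // a ∈ body S} | bodyMap c.π.toFun a.1 ∈ P}

/-- A game `(T, P)` is universally unravelable if for every covering of `T` the game with the
preimage of `P` as payoff set is unravelable. -/
def UnivUnravelable [Inhabited A] (T : Set (List A)) (P : Set (ℕ → A)) : Prop :=
  ∀ (B : Type u) (_ : Inhabited B) (S : Set (List B)) (c : Covering S T),
    IsTree S → IsPruned S → S.Nonempty →
    Unravelable S (bodyMap c.π.toFun ⁻¹' P)

end GS

namespace GS

section ClosedAux
attribute [local instance] Classical.propDecidable
variable {A : Type u}

/-- Positions all of whose branch extensions lie outside `P` (player 0 has already lost). -/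
def BaseLost (T : Set (List A)) (P : Set (ℕ → A)) (x : List A) : Prop :=
  ∀ c ∈ body T, (∀ i : ℕ, ∀ h : i < x.length, c i = x.get ⟨i, h⟩) → c ∉ P

/-- One step of the "player 1 wins" operator. -/
def FF (T : Set (List A)) (P : Set (ℕ → A)) (W : Set (List A)) : Set (List A) :=
  {x | x ∈ T ∧ (BaseLost T P x ∨
    (x.length % 2 = 1 ∧ ∃ a, x ++ [a] ∈ T ∧ x ++ [a] ∈ W) ∨
    (x.length % 2 = 0 ∧ ∀ a, x ++ [a] ∈ T → x ++ [a] ∈ W))}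

/-- Transfinite iteration of `FF`. -/
noncomputable def approx (T : Set (List A)) (P : Set (ℕ → A)) (α : Ordinal.{u}) :
    Set (List A) :=
  FF T P {x | ∃ β, ∃ _ : β < α, x ∈ approx T P β}
termination_by α

lemma approx_eq (T : Set (List A)) (P : Set (ℕ → A)) (α : Ordinal.{u}) :
    approx T P α = FF T P {x | ∃ β, ∃ _ : β < α, x ∈ approx T P β} := by
  rw [approx]

/-- Positions from which player 1 can force a win. -/
def Win (T : Set (List A)) (P : Set (ℕ → A)) : Set (List A) :=
  {x | ∃ α : Ordinal.{u}, x ∈ approx T P α}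

/-- The rank of a winning position. -/
noncomputable def rk (T : Set (List A)) (P : Set (ℕ → A)) (x : List A) : Ordinal.{u} :=
  sInf {α | x ∈ approx T P α}

variable {T : Set (List A)} {P : Set (ℕ → A)}

lemma mem_approx_rk {x : List A} (h : x ∈ Win T P) : x ∈ approx T P (rk T P x) :=
  csInf_mem h

lemma rk_le {x : List A} {β} (h : x ∈ approx T P β) : rk T P x ≤ β :=
  csInf_le (OrderBot.bddBelow _) h

lemma win_of_base {x : List A} (hx : x ∈ T) (hb : BaseLost T P x) : x ∈ Win T P :=
  ⟨0, by rw [approx_eq]; exact ⟨hx, Or.inl hb⟩⟩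

lemma win_of_odd {x : List A} {a : A} (hx : x ∈ T) (hodd : x.length % 2 = 1)
    (hch : x ++ [a] ∈ T) (hw : x ++ [a] ∈ Win T P) : x ∈ Win T P := by
  obtain ⟨α, hα⟩ := hw
  exact ⟨α + 1, by
    rw [approx_eq]
    exact ⟨hx, Or.inr (Or.inl ⟨hodd, a, hch, ⟨α, Order.lt_succ α, hα⟩⟩)⟩⟩

lemma win_of_even {x : List A} (hx : x ∈ T) (heven : x.length % 2 = 0)
    (hw : ∀ a, x ++ [a] ∈ T → x ++ [a] ∈ Win T P) : x ∈ Win T P := by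
  refine ⟨(⨆ a : A, rk T P (x ++ [a])) + 1, ?_⟩
  rw [approx_eq]
  refine ⟨hx, Or.inr (Or.inr ⟨heven, fun a ha => ?_⟩)⟩
  refine ⟨rk T P (x ++ [a]), ?_, mem_approx_rk (hw a ha)⟩
  exact lt_of_le_of_lt (le_ciSup (Ordinal.bddAbove_range _) a) (Order.lt_succ _)

lemma win_dest {x : List A} (h : x ∈ Win T P) :
    BaseLost T P x ∨
    (x.length % 2 = 1 ∧ ∃ a, x ++ [a] ∈ T ∧ ∃ β, β < rk T P x ∧ x ++ [a] ∈ approx T P β) ∨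
    (x.length % 2 = 0 ∧ ∀ a, x ++ [a] ∈ T → ∃ β, β < rk T P x ∧ x ++ [a] ∈ approx T P β) := by
  have h2 := mem_approx_rk h
  rw [approx_eq] at h2
  rcases h2.2 with hb | ⟨ho, a, ha, β, hβ, hm⟩ | ⟨he, hf⟩
  · exact Or.inl hb
  · exact Or.inr (Or.inl ⟨ho, a, ha, β, hβ, hm⟩)
  · exact Or.inr (Or.inr ⟨he, fun a ha => by
      obtain ⟨β, hβ, hm⟩ := hf a ha; exact ⟨β, hβ, hm⟩⟩)

/-- Player 1's strategy: move to a position of smaller rank if possible. -/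
noncomputable def strat1 (T : Set (List A)) (P : Set (ℕ → A)) (hpr : IsPruned T)
    (hA : Nonempty A) : Strategy T 1 where
  move x :=
    if h : ∃ a, x ++ [a] ∈ T ∧ ∃ β, β < rk T P x ∧ x ++ [a] ∈ approx T P β then h.choose
    else if h' : x ∈ T then (hpr x h').choose else Classical.arbitrary A
  legal x hx _ := by
    by_cases h : ∃ a, x ++ [a] ∈ T ∧ ∃ β, β < rk T P x ∧ x ++ [a] ∈ approx T P β
    · simp only [dif_pos h]; exact h.choose_spec.1
    · simp only [dif_neg h, dif_pos hx]; exact (hpr x hx).choose_spec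

/-- Player 0's strategy: move to a non-winning-for-1 position if possible. -/
noncomputable def strat0 (T : Set (List A)) (P : Set (ℕ → A)) (hpr : IsPruned T)
    (hA : Nonempty A) : Strategy T 0 where
  move x :=
    if h : ∃ a, x ++ [a] ∈ T ∧ x ++ [a] ∉ Win T P then h.choose
    else if h' : x ∈ T then (hpr x h').choose else Classical.arbitrary A
  legal x hx _ := by
    by_cases h : ∃ a, x ++ [a] ∈ T ∧ x ++ [a] ∉ Win T P
    · simp only [dif_pos h]; exact h.choose_spec.1
    · simp only [dif_neg h, dif_pos hx]; exact (hpr x hx).choose_spec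

lemma ofFn_succ_append (b : ℕ → A) (n : ℕ) :
    (List.ofFn fun i : Fin (n + 1) => b i) = (List.ofFn fun i : Fin n => b i) ++ [b n] := by
  rw [List.ofFn_succ']
  simp [List.concat_eq_append]

end ClosedAux

/-- Closed Gale-Stewart games are determined. -/
theorem closed_determinacy {A : Type u} (T : Set (List A)) (P : Set (ℕ → A))
    (hT : IsTree T) (hpr : IsPruned T) (hne : T.Nonempty)
    (hP : @IsClosed _ (bodyTop T) {a : {a // a ∈ body T} | a.1 ∈ P}) :
    Determined T P := by
  classical
  obtain ⟨x0, hx0⟩ := hne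
  have hA : Nonempty A := ⟨(hpr x0 hx0).choose⟩
  have hnil : ([] : List A) ∈ T := hT List.nil_prefix hx0
  by_cases hwin : ([] : List A) ∈ Win T P
  · -- player 1 wins
    refine Or.inr ⟨strat1 T P hpr hA, ?_⟩
    intro b hb
    simp only [Nat.one_mod, if_neg one_ne_zero]
    obtain ⟨hbody, hcons⟩ := hb
    intro hbP
    set p : ℕ → List A := fun n => List.ofFn fun i : Fin n => b i with hp
    have hpT : ∀ n, p n ∈ T := fun n => hbody n
    have hlen : ∀ n, (p n).length = n := fun n => by simp [hp]
    have hsucc : ∀ n, p (n + 1) = p n ++ [b n] := fun n => ofFn_succ_append b n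
    have step : ∀ n, p n ∈ Win T P →
        p (n + 1) ∈ Win T P ∧ rk T P (p (n + 1)) < rk T P (p n) := by
      intro n hn
      rcases win_dest hn with hbase | ⟨ho, hex⟩ | ⟨he, hf⟩
      · exact absurd hbP (hbase b hbody (fun i h => by simp [hp]))
      · have hn1 : n % 2 = 1 := by rw [hlen n] at ho; exact ho
        have hb1 : b n = (strat1 T P hpr hA).move (p n) := hcons n (by rw [hn1])
        have hmove : (strat1 T P hpr hA).move (p n) = hex.choose := by
          simp only [strat1, dif_pos hex]
        obtain ⟨hchT, β, hβ, hm⟩ := hex.choose_spec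
        rw [hsucc n, hb1, hmove]
        exact ⟨⟨β, hm⟩, lt_of_le_of_lt (rk_le hm) hβ⟩
      · have hchT : p n ++ [b n] ∈ T := by rw [← hsucc n]; exact hpT (n + 1)
        obtain ⟨β, hβ, hm⟩ := hf (b n) hchT
        rw [hsucc n]
        exact ⟨⟨β, hm⟩, lt_of_le_of_lt (rk_le hm) hβ⟩
    have hWin : ∀ n, p n ∈ Win T P := by
      intro n
      induction n with
      | zero => simpa [hp] using hwin
      | succ n ih => exact (step n ih).1
    obtain ⟨m, ⟨n, rfl⟩, hmin⟩ :=
      Ordinal.lt_wf.has_min (Set.range fun n => rk T P (p n)) ⟨_, 0, rfl⟩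
    exact hmin _ ⟨n + 1, rfl⟩ (step n (hWin n)).2
  · -- player 0 wins
    refine Or.inl ⟨strat0 T P hpr hA, ?_⟩
    intro b hb
    simp only [Nat.zero_mod, if_pos rfl]
    obtain ⟨hbody, hcons⟩ := hb
    set p : ℕ → List A := fun n => List.ofFn fun i : Fin n => b i with hp
    have hpT : ∀ n, p n ∈ T := fun n => hbody n
    have hlen : ∀ n, (p n).length = n := fun n => by simp [hp]
    have hsucc : ∀ n, p (n + 1) = p n ++ [b n] := fun n => ofFn_succ_append b n
    have hNW : ∀ n, p n ∉ Win T P := by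
      intro n
      induction n with
      | zero => simpa [hp] using hwin
      | succ n ih =>
        rcases Nat.even_or_odd n with hev | hod
        · have hn0 : n % 2 = 0 := Nat.even_iff.mp hev
          have hcond : ∃ a, p n ++ [a] ∈ T ∧ p n ++ [a] ∉ Win T P := by
            by_contra hc
            push_neg at hc
            exact ih (win_of_even (hpT n) (by rw [hlen n]; exact hn0) hc)
          have hb0 : b n = (strat0 T P hpr hA).move (p n) := hcons n (by rw [hn0])
          have hmove : (strat0 T P hpr hA).move (p n) = hcond.choose := by
            simp only [strat0, dif_pos hcond]
          rw [hsucc n, hb0, hmove]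
          exact hcond.choose_spec.2
        · have hn1 : n % 2 = 1 := Nat.odd_iff.mp hod
          intro hW
          rw [hsucc n] at hW
          exact ih (win_of_odd (hpT n) (by rw [hlen n]; exact hn1)
            (by rw [← hsucc n]; exact hpT (n + 1)) hW)
    have hcl : ∀ n : ℕ, ∃ c, c ∈ body T ∧ c ∈ P ∧ ∀ i < n, c i = b i := by
      intro n
      have hnb : ¬ BaseLost T P (p n) := fun hbase => hNW n (win_of_base (hpT n) hbase)
      unfold BaseLost at hnb
      push_neg at hnb
      obtain ⟨c, hc1, hc2, hc3⟩ := hnb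
      refine ⟨c, hc1, hc3, fun i hi => ?_⟩
      have hi' : i < (p n).length := by rw [hlen n]; exact hi
      rw [hc2 i hi']
      simp [hp]
    by_contra hbP
    have hopen : @IsOpen _ (bodyTop T) {a : {a // a ∈ body T} | a.1 ∈ P}ᶜ :=
      hP.isOpen_compl
    obtain ⟨U, hU, hpre⟩ := hopen
    have hbU : b ∈ U := by
      have : (⟨b, hbody⟩ : {a // a ∈ body T}) ∈ Subtype.val ⁻¹' U := by
        rw [hpre]; exact hbP
      exact this
    obtain ⟨I, u, hIu, hsub⟩ :=
      (@isOpen_pi_iff ℕ (fun _ => A) (fun _ => ⊥) U).mp hU b hbU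
    obtain ⟨c, hc1, hc2, hc3⟩ := hcl (I.sup id + 1)
    have hcU : c ∈ U := by
      apply hsub
      intro i hi
      have : c i = b i := hc3 i (Nat.lt_succ_of_le (Finset.le_sup (f := id) hi))
      rw [this]
      exact (hIu i hi).2
    have : (⟨c, hc1⟩ : {a // a ∈ body T}) ∈ {a : {a // a ∈ body T} | a.1 ∈ P}ᶜ := by
      rw [← hpre]; exact hcU
    exact this hc2

end GS
end

section
/- Zermelo's theorem for open games, strengthened form: if player 1 has no winning strategy in a Gale-Stewart game (T, P), then player 0 has a strategy that never moves into a position from which player 1 has a winning strategy; moreover, if P is closed in [T], any such strategy of player 0 is winning for player 0. -/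
universe u

namespace GS
/-- The subtree of extensions of a position `x`. -/
def subAt {A : Type u} (T : Set (List A)) (x : List A) : Set (List A) := {y | x ++ y ∈ T}

/-- Prepending a finite sequence to an infinite sequence. -/
def seqAppend {A : Type u} (x : List A) (a : ℕ → A) : ℕ → A := fun n =>
  if h : n < x.length then x.get ⟨n, h⟩ else a (n - x.length)

/-- Player `1` has a winning strategy in the subgame of `(T, P)` at position `x`. -/
def Player1WinsFrom {A : Type u} (T : Set (List A)) (P : Set (ℕ → A)) (x : List A) : Prop :=
  ∃ σ : Strategy (subAt T x) (x.length + 1), ∀ a ∈ plays σ, seqAppend x a ∉ P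
end GS

namespace GS

section Aux

variable {A : Type u} {T : Set (List A)} {P : Set (ℕ → A)}

open Classical in
/-- A default legal move at any node of a pruned tree. -/
noncomputable def pch (T : Set (List A)) (hpr : IsPruned T) (d : A) (y : List A) : A :=
  if h : y ∈ T then (hpr y h).choose else d

lemma pch_mem (hpr : IsPruned T) (d : A) {y : List A} (hy : y ∈ T) :
    y ++ [pch T hpr d y] ∈ T := by
  rw [pch, dif_pos hy]; exact (hpr y hy).choose_spec

lemma ofFn_succ_shift (a : ℕ → A) (n : ℕ) :
    (List.ofFn fun j : Fin (n + 1) => a j) = a 0 :: List.ofFn fun j : Fin n => a (j + 1) := by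
  rw [List.ofFn_succ]
  simp [Fin.val_succ]

/-- Shift lemma: a play consistent with `τ` starting with the move `b`, after which `τ`
plays like a winning strategy `σ'` of the subgame at `x ++ [b]`, lands outside `P`. -/
lemma shift_not_mem {x : List A} {b : A} {j : ℕ} (hj : j % 2 = x.length % 2)
    (σ' : Strategy (subAt T (x ++ [b])) j)
    (τ : Strategy (subAt T x) (x.length + 1))
    (hagree : ∀ z, z ∈ subAt T (x ++ [b]) → z.length % 2 = j % 2 →
      τ.move (b :: z) = σ'.move z)
    (hwin : ∀ a ∈ plays σ', seqAppend (x ++ [b]) a ∉ P)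
    {a : ℕ → A} (ha : a ∈ plays τ) (ha0 : a 0 = b) :
    seqAppend x a ∉ P := by
  set z : ℕ → A := fun n => a (n + 1) with hzdef
  have hofFn : ∀ n, (List.ofFn fun j : Fin (n + 1) => a j)
      = b :: List.ofFn fun j : Fin n => z j := by
    intro n; rw [ofFn_succ_shift, ha0]
  have hbodyz : z ∈ body (subAt T (x ++ [b])) := by
    intro n
    have h := ha.1 (n + 1)
    rw [hofFn n] at h
    show (x ++ [b]) ++ _ ∈ T
    simpa [subAt] using h
  have hconsz : Consistent σ' z := by
    intro m hm
    have hm' : (m + 1) % 2 = (x.length + 1) % 2 := by omega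
    have h1 := ha.2 (m + 1) hm'
    rw [hofFn m] at h1
    have hzmem : (List.ofFn fun j : Fin m => z j) ∈ subAt T (x ++ [b]) := hbodyz m
    have hplen : (List.ofFn fun j : Fin m => z j).length % 2 = j % 2 := by
      simp only [List.length_ofFn]; omega
    rw [hagree _ hzmem hplen] at h1
    exact h1
  have heq : seqAppend x a = seqAppend (x ++ [b]) z := by
    funext n
    simp only [seqAppend, List.length_append, List.length_cons, List.length_nil]
    rcases lt_trichotomy n x.length with h | h | h
    · rw [dif_pos h, dif_pos (by omega : n < x.length + (0 + 1))]
      simp [List.get_eq_getElem, List.getElem_append_left h]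
    · subst h
      rw [dif_neg (by omega), dif_pos (by omega : x.length < x.length + (0 + 1))]
      simp [List.get_eq_getElem, ha0]
    · rw [dif_neg (by omega), dif_neg (by omega)]
      show a (n - x.length) = a (n - (x.length + (0 + 1)) + 1)
      congr 1; omega
  rw [heq]
  exact hwin z ⟨hbodyz, hconsz⟩

/-- If every branch through `x` avoids `P`, then player 1 wins from `x` (trivially). -/
lemma p1wins_of_avoid (hpr : IsPruned T) (d : A) {x : List A}
    (hav : ∀ a : ℕ → A, (∀ n, x ++ (List.ofFn fun j : Fin n => a j) ∈ T) → seqAppend x a ∉ P) :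
    Player1WinsFrom T P x := by
  refine ⟨⟨fun y => pch T hpr d (x ++ y), ?_⟩, ?_⟩
  · intro y hy _
    have := pch_mem hpr d (y := x ++ y) hy
    show x ++ (y ++ _) ∈ T
    simpa [List.append_assoc] using this
  · intro a ha
    exact hav a ha.1

/-- If player 1 wins from every child of an even (player-0) position `x`, then
player 1 wins from `x`. -/
lemma p1wins_of_all_children (hT : IsTree T) (d : A) {x : List A}
    (hpar : x.length % 2 = 0)
    (hall : ∀ a : A, x ++ [a] ∈ T → Player1WinsFrom T P (x ++ [a])) :
    Player1WinsFrom T P x := by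
  classical
  have hσ : ∀ (c : A), x ++ [c] ∈ T →
      ∃ σ : Strategy (subAt T (x ++ [c])) ((x ++ [c]).length + 1),
        ∀ a ∈ plays σ, seqAppend (x ++ [c]) a ∉ P := fun c hc => hall c hc
  choose σf hσf using hσ
  refine ⟨⟨fun y => match y with
    | [] => d
    | c :: z => if h : x ++ [c] ∈ T then (σf c h).move z else d, ?_⟩, ?_⟩
  · intro y hy hylen
    match y with
    | [] => simp at hylen; omega
    | c :: z =>
      have hc : x ++ [c] ∈ T := by
        refine hT ?_ hy
        show x ++ [c] <+: x ++ (c :: z)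
        simpa using (List.prefix_append ([c]) z).append_left x
      simp only [dif_pos hc]
      have hz : z ∈ subAt T (x ++ [c]) := by
        show (x ++ [c]) ++ z ∈ T
        simpa [subAt] using hy
      have hzpar : z.length % 2 = ((x ++ [c]).length + 1) % 2 := by
        simp only [List.length_cons] at hylen
        simp only [List.length_append, List.length_cons, List.length_nil]
        omega
      have h2 : (x ++ [c]) ++ (z ++ [(σf c hc).move z]) ∈ T := (σf c hc).legal z hz hzpar
      show x ++ (c :: (z ++ _)) ∈ T
      simpa [List.append_assoc] using h2
  · intro a ha
    have hc : x ++ [a 0] ∈ T := by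
      have h := ha.1 1
      simpa [List.ofFn_succ, subAt] using h
    refine shift_not_mem (b := a 0) (j := (x ++ [a 0]).length + 1)
      (by simp only [List.length_append, List.length_cons, List.length_nil]; omega)
      (σf (a 0) hc) _ ?_ (hσf (a 0) hc) ha rfl
    intro z _ _
    simp only [dif_pos hc]

/-- If player 1 wins from a child of an odd (player-1) position `x`, then player 1
wins from `x`. -/
lemma p1wins_of_child (hT : IsTree T) (hpr : IsPruned T) (d : A) {x : List A} {b : A}
    (hpar : x.length % 2 = 1) (hxb : x ++ [b] ∈ T)
    (hwin : Player1WinsFrom T P (x ++ [b])) :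
    Player1WinsFrom T P x := by
  classical
  obtain ⟨σ', hσ'⟩ := hwin
  refine ⟨⟨fun y => match y with
    | [] => b
    | c :: z => if c = b then σ'.move z else pch T hpr d (x ++ (c :: z)), ?_⟩, ?_⟩
  · intro y hy hylen
    match y with
    | [] => simpa [subAt] using hxb
    | c :: z =>
      by_cases hc : c = b
      · subst hc
        simp only [if_pos rfl]
        have hz : z ∈ subAt T (x ++ [c]) := by
          show (x ++ [c]) ++ z ∈ T
          simpa [subAt] using hy
        have hzpar : z.length % 2 = ((x ++ [c]).length + 1) % 2 := by
          simp only [List.length_cons] at hylen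
          simp only [List.length_append, List.length_cons, List.length_nil]
          omega
        have h2 : (x ++ [c]) ++ (z ++ [σ'.move z]) ∈ T := σ'.legal z hz hzpar
        show x ++ (c :: (z ++ _)) ∈ T
        simpa [List.append_assoc] using h2
      · simp only [if_neg hc]
        have := pch_mem hpr d (y := x ++ (c :: z)) hy
        show x ++ ((c :: z) ++ _) ∈ T
        simpa [List.append_assoc] using this
  · intro a ha
    have ha0 : a 0 = b := by
      have := ha.2 0 (by omega)
      simpa using this
    refine shift_not_mem (b := b) (j := (x ++ [b]).length + 1)
      (by simp only [List.length_append, List.length_cons, List.length_nil]; omega)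
      σ' _ ?_ hσ' ha ha0
    intro z _ _
    simp

lemma ofFn_seqAppend (x : List A) (z : ℕ → A) (m : ℕ) :
    (List.ofFn fun j : Fin m => seqAppend x z j)
      = x.take m ++ List.ofFn fun j : Fin (m - x.length) => z j := by
  refine List.ext_getElem (by simp; omega) ?_
  intro i h1 h2
  simp only [List.length_ofFn] at h1
  simp only [List.getElem_ofFn, seqAppend]
  rcases lt_or_ge i x.length with h | h
  · rw [dif_pos h]
    rw [List.getElem_append_left (by simp; omega)]
    simp [List.get_eq_getElem]
  · rw [dif_neg (by omega)]
    rw [List.getElem_append_right (by simp; omega)]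
    simp only [List.getElem_ofFn]
    congr 1
    simp only [List.length_take]
    omega

end Aux

/-- Zermelo's theorem, strengthened form: if player `1` has no winning strategy, player `0` has
a strategy never moving into a position from which player `1` has a winning strategy; if `P` is
closed, any such strategy is winning for player `0`. -/
theorem zermelo_strengthened {A : Type u} (T : Set (List A)) (P : Set (ℕ → A))
    (hT : IsTree T) (hpr : IsPruned T) (hne : T.Nonempty)
    (h1 : ¬ Player1WinsFrom T P ([] : List A)) :
    (∃ σ : Strategy T 0, ∀ x ∈ T, x.length % 2 = 0 → ¬ Player1WinsFrom T P x →
      ¬ Player1WinsFrom T P (x ++ [σ.move x])) ∧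
    (@IsClosed _ (bodyTop T) {a : {a // a ∈ body T} | a.1 ∈ P} →
      ∀ σ : Strategy T 0, (∀ x ∈ T, x.length % 2 = 0 → ¬ Player1WinsFrom T P x →
        ¬ Player1WinsFrom T P (x ++ [σ.move x])) →
      WinningStrategy T P σ) := by
  classical
  have hnil : ([] : List A) ∈ T := by
    obtain ⟨x, hx⟩ := hne
    exact hT List.nil_prefix hx
  obtain ⟨d, -⟩ := hpr [] hnil
  constructor
  · -- part 1
    have good : ∀ x, x ∈ T → x.length % 2 = 0 → ¬ Player1WinsFrom T P x →
        ∃ a, x ++ [a] ∈ T ∧ ¬ Player1WinsFrom T P (x ++ [a]) := by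
      intro x hx hp hw
      by_contra h
      push_neg at h
      exact hw (p1wins_of_all_children hT d hp h)
    refine ⟨⟨fun x => if h : x ∈ T ∧ x.length % 2 = 0 ∧ ¬ Player1WinsFrom T P x then
        (good x h.1 h.2.1 h.2.2).choose
      else pch T hpr d x, ?_⟩, ?_⟩
    · intro x hx hp
      by_cases h : x ∈ T ∧ x.length % 2 = 0 ∧ ¬ Player1WinsFrom T P x
      · simp only [dif_pos h]; exact (good x h.1 h.2.1 h.2.2).choose_spec.1
      · simp only [dif_neg h]; exact pch_mem hpr d hx
    · intro x hx hp hw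
      have h : x ∈ T ∧ x.length % 2 = 0 ∧ ¬ Player1WinsFrom T P x := ⟨hx, hp, hw⟩
      simp only [dif_pos h]
      exact (good x h.1 h.2.1 h.2.2).choose_spec.2
  · -- part 2
    intro hcl σ hσ a ha
    rw [if_pos (show (0 : ℕ) % 2 = 0 from rfl)]
    by_contra hnP
    have hpre : ∀ n, ¬ Player1WinsFrom T P (List.ofFn fun j : Fin n => a j) := by
      intro n
      induction n with
      | zero => simpa using h1
      | succ n ih =>
        have hsucc : (List.ofFn fun j : Fin (n + 1) => a j)
            = (List.ofFn fun j : Fin n => a j) ++ [a n] := by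
          rw [List.ofFn_succ']
          simp
        have hlen : (List.ofFn fun j : Fin n => a j).length = n := by simp
        rw [hsucc]
        rcases Nat.even_or_odd n with he | ho
        · have hp : n % 2 = 0 := Nat.even_iff.mp he
          have hcons := ha.2 n (by simpa using hp)
          rw [hcons]
          exact hσ _ (ha.1 n) (by rw [hlen]; exact hp) ih
        · have hp : n % 2 = 1 := Nat.odd_iff.mp ho
          intro hw
          refine ih (p1wins_of_child hT hpr d (by rw [hlen]; exact hp) ?_ hw)
          rw [← hsucc]; exact ha.1 (n + 1)
    letI : ∀ _ : ℕ, TopologicalSpace A := fun _ => ⊥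
    letI : TopologicalSpace (ℕ → A) := seqTop A
    letI : TopologicalSpace {a // a ∈ body T} := bodyTop T
    have hopen : IsOpen {p : {a // a ∈ body T} | p.1 ∈ P}ᶜ := hcl.isOpen_compl
    obtain ⟨U, hU, hUeq⟩ := isOpen_induced_iff.mp hopen
    have haU : a ∈ U := by
      have : (⟨a, ha.1⟩ : {a // a ∈ body T}) ∈ Subtype.val ⁻¹' U := by
        rw [hUeq]; exact hnP
      exact this
    obtain ⟨I, u, hu, hsub⟩ :=
      (@isOpen_pi_iff ℕ (fun _ => A) (fun _ => ⊥) U).mp hU a haU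
    set n := I.sup id + 1 with hn
    set x := (List.ofFn fun j : Fin n => a j) with hx
    have hxlen : x.length = n := by simp [hx, hn]
    refine hpre n (p1wins_of_avoid hpr d ?_)
    intro z hz
    set b := seqAppend x z with hb
    have hbbody : b ∈ body T := by
      intro m
      show (List.ofFn fun j : Fin m => seqAppend x z j) ∈ T
      rw [ofFn_seqAppend]
      rcases le_or_gt m n with hm | hm
      · have h0 : m - x.length = 0 := by omega
        rw [h0]
        simp only [List.ofFn_zero, List.append_nil]
        exact hT (List.take_prefix m x) (ha.1 n)
      · rw [List.take_of_length_le (by omega)]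
        exact hz (m - x.length)
    have hbagree : ∀ i ∈ (I : Set ℕ), b i ∈ u i := by
      intro i hi
      have hin : i < n := Nat.lt_succ_of_le (Finset.le_sup (f := id) hi)
      have hbi : b i = a i := by
        show seqAppend x z i = a i
        rw [seqAppend, dif_pos (by omega : i < x.length)]
        simp only [List.get_eq_getElem, hx, List.getElem_ofFn]
      rw [hbi]
      exact (hu i hi).2
    have hbU : b ∈ U := hsub hbagree
    have hbP : b ∉ P := by
      have : (⟨b, hbbody⟩ : {a // a ∈ body T}) ∈ Subtype.val ⁻¹' U := hbU
      rw [hUeq] at this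
      exact this
    exact hbP
end GS
end

section
/- There exists an undetermined Gale-Stewart game on the two-element set A = {0,1}, i.e., a payoff set P ⊆ 2^ℕ such that in the game on the full binary tree neither player has a winning strategy. -/
universe u

namespace GS


private def GSstep (i : ℕ) (m : List Bool → Bool) (b : ℕ → Bool) (n : ℕ) (l : List Bool) : Bool :=
  if n % 2 = i % 2 then m l else b (n / 2)

private def GShist (i : ℕ) (m : List Bool → Bool) (b : ℕ → Bool) : ℕ → List Bool
  | 0 => []
  | n + 1 => GShist i m b n ++ [GSstep i m b n (GShist i m b n)]

private def GSdiag (i : ℕ) (m : List Bool → Bool) (b : ℕ → Bool) (n : ℕ) : Bool :=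
  GSstep i m b n (GShist i m b n)

private lemma GShist_eq (i : ℕ) (m : List Bool → Bool) (b : ℕ → Bool) :
    ∀ n, (List.ofFn fun j : Fin n => GSdiag i m b j) = GShist i m b n
  | 0 => rfl
  | n + 1 => by
    rw [List.ofFn_succ']
    simp only [Fin.coe_castSucc, Fin.val_last, List.concat_eq_append, GShist_eq i m b n]
    rfl

private lemma GSdiag_mem_plays (i : ℕ) (σ : Strategy (Set.univ : Set (List Bool)) i)
    (b : ℕ → Bool) : GSdiag i σ.move b ∈ plays σ := by
  refine ⟨fun n => Set.mem_univ _, fun n hn => ?_⟩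
  rw [GShist_eq]
  simp [GSdiag, GSstep, hn]

private lemma GSdiag_injective (i : ℕ) (m : List Bool → Bool) :
    Function.Injective (GSdiag i m) := by
  intro b b' h
  funext k
  have key : ∀ c : ℕ → Bool, ∀ n : ℕ, n % 2 ≠ i % 2 → GSdiag i m c n = c (n / 2) := by
    intro c n hn
    simp [GSdiag, GSstep, hn]
  rcases Nat.mod_two_eq_zero_or_one i with hi | hi
  · have h1 : (2 * k + 1) % 2 ≠ i % 2 := by omega
    have := congrFun h (2 * k + 1)
    rw [key b _ h1, key b' _ h1] at this
    simpa [Nat.mul_add_div] using this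
  · have h1 : (2 * k) % 2 ≠ i % 2 := by omega
    have := congrFun h (2 * k)
    rw [key b _ h1, key b' _ h1] at this
    simpa [Nat.mul_div_cancel_left] using this

private def Idx : Type :=
  Strategy (Set.univ : Set (List Bool)) 0 ⊕ Strategy (Set.univ : Set (List Bool)) 1

private def strIdx (p : Idx) : ℕ := Sum.elim (fun _ => 0) (fun _ => 1) p

private def strOf : ∀ p : Idx, Strategy (Set.univ : Set (List Bool)) (strIdx p)
  | .inl σ => σ
  | .inr σ => σ

private lemma strategy_ext {T : Set (List Bool)} {i : ℕ} {σ σ' : Strategy T i}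
    (h : σ.move = σ'.move) : σ = σ' := by
  cases σ; cases σ'; cases h; rfl

private noncomputable def pairEmbed (p : Bool × (List Bool → Bool)) : ℕ → Bool :=
  fun n => if n = 0 then p.1
    else p.2 (Function.invFun (Encodable.encode : List Bool → ℕ) (n - 1))

private lemma pairEmbed_inj : Function.Injective pairEmbed := by
  intro p q h
  have h0 : p.1 = q.1 := by simpa [pairEmbed] using congrFun h 0
  have h2 : p.2 = q.2 := by
    funext l
    have := congrFun h (Encodable.encode l + 1)
    simpa [pairEmbed,
      Function.leftInverse_invFun (Encodable.encode_injective (α := List Bool)) l] using this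
  exact Prod.ext h0 h2

private def idxEmbed (p : Idx) : Bool × (List Bool → Bool) :=
  Sum.elim (fun σ => (false, σ.move)) (fun τ => (true, τ.move)) p

private lemma idxEmbed_inj : Function.Injective idxEmbed := by
  rintro (σ | σ) (τ | τ) h <;>
    simp only [idxEmbed, Sum.elim_inl, Sum.elim_inr, Prod.mk.injEq] at h
  · exact congrArg Sum.inl (strategy_ext h.2)
  · exact absurd h.1 (by simp)
  · exact absurd h.1 (by simp)
  · exact congrArg Sum.inr (strategy_ext h.2)

private lemma mk_Idx_le : Cardinal.mk Idx ≤ Cardinal.mk (ℕ → Bool) :=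
  Cardinal.mk_le_of_injective (pairEmbed_inj.comp idxEmbed_inj)

private lemma small_avoid {i : ℕ} (σ : Strategy (Set.univ : Set (List Bool)) i)
    {s : Set (ℕ → Bool)} (hs : Cardinal.mk s < Cardinal.mk Idx) :
    ∃ a ∈ plays σ, a ∉ s := by
  by_contra hcon
  push_neg at hcon
  have hsub : plays σ ⊆ s := hcon
  have h1 : Cardinal.mk (ℕ → Bool) ≤ Cardinal.mk (plays σ) :=
    Cardinal.mk_le_of_injective
      (f := fun b => (⟨GSdiag i σ.move b, GSdiag_mem_plays i σ b⟩ : plays σ))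
      (fun b b' hb => GSdiag_injective i σ.move (congrArg Subtype.val hb))
  have h2 : Cardinal.mk (plays σ) ≤ Cardinal.mk s := Cardinal.mk_le_mk_of_subset hsub
  exact absurd ((h1.trans h2).trans_lt hs) (not_lt_of_ge mk_Idx_le)

private lemma pick_exists (e : (Cardinal.mk Idx).ord.ToType ≃ Idx)
    (x : (Cardinal.mk Idx).ord.ToType) (rec : ∀ y, y < x → (ℕ → Bool)) :
    ∃ a, a ∈ plays (strOf (e x)) ∧ ∀ y (h : y < x), rec y h ≠ a := by
  have hs : Cardinal.mk {a : ℕ → Bool | ∃ y h, rec y h = a} < Cardinal.mk Idx := by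
    have hsub : {a : ℕ → Bool | ∃ y h, rec y h = a} ⊆
        Set.range (fun z : Set.Iio x => rec z.1 z.2) := by
      rintro a ⟨y, h, rfl⟩; exact ⟨⟨y, h⟩, rfl⟩
    calc Cardinal.mk {a : ℕ → Bool | ∃ y h, rec y h = a}
        ≤ Cardinal.mk (Set.range (fun z : Set.Iio x => rec z.1 z.2)) :=
          Cardinal.mk_le_mk_of_subset hsub
      _ ≤ Cardinal.mk (Set.Iio x) := Cardinal.mk_range_le
      _ < Cardinal.mk Idx := Cardinal.mk_Iio_ord_toType x
  obtain ⟨a, ha, hns⟩ := small_avoid (strOf (e x)) hs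
  exact ⟨a, ha, fun y h hy => hns ⟨y, h, hy⟩⟩

private noncomputable def pick (e : (Cardinal.mk Idx).ord.ToType ≃ Idx) :
    (Cardinal.mk Idx).ord.ToType → (ℕ → Bool) :=
  wellFounded_lt.fix fun x rec => Classical.choose (pick_exists e x rec)

private lemma pick_spec (e : (Cardinal.mk Idx).ord.ToType ≃ Idx)
    (x : (Cardinal.mk Idx).ord.ToType) :
    pick e x ∈ plays (strOf (e x)) ∧ ∀ y, y < x → pick e y ≠ pick e x := by
  have hfix : pick e x = Classical.choose (pick_exists e x fun y _ => pick e y) :=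
    wellFounded_lt.fix_eq _ x
  constructor
  · rw [hfix]; exact (Classical.choose_spec (pick_exists e x fun y _ => pick e y)).1
  · intro y hy
    rw [hfix]; exact (Classical.choose_spec (pick_exists e x fun y _ => pick e y)).2 y hy

private lemma pick_inj (e : (Cardinal.mk Idx).ord.ToType ≃ Idx)
    {x y : (Cardinal.mk Idx).ord.ToType} (h : x ≠ y) : pick e x ≠ pick e y := by
  rcases h.lt_or_gt with h' | h'
  · exact (pick_spec e y).2 x h'
  · exact fun hh => (pick_spec e x).2 y h' hh.symm


/-- There is an undetermined Gale-Stewart game on the full binary tree. -/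
theorem exists_undetermined :
    ∃ P : Set (ℕ → Bool), ¬ Determined (Set.univ : Set (List Bool)) P := by
  classical
  obtain ⟨e⟩ : Nonempty ((Cardinal.mk Idx).ord.ToType ≃ Idx) :=
    Cardinal.eq.mp (Cardinal.mk_ord_toType _)
  refine ⟨pick e '' {x | strIdx (e x) = 1}, ?_⟩
  rintro (⟨σ, hσ⟩ | ⟨τ, hτ⟩)
  · set x := e.symm (Sum.inl σ) with hx
    have he : e x = Sum.inl σ := e.apply_symm_apply _
    have h1 : pick e x ∈ plays (strOf (e x)) := (pick_spec e x).1
    rw [he] at h1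
    have h1' : pick e x ∈ plays σ := h1
    have h2 : pick e x ∈ pick e '' {z | strIdx (e z) = 1} := by
      have := hσ _ h1'
      simpa using this
    obtain ⟨y, hy, hxy⟩ := h2
    have hne : y ≠ x := by
      intro hyx
      rw [hyx] at hy
      simp only [Set.mem_setOf_eq, he, strIdx, Sum.elim_inl] at hy
      exact absurd hy (by decide)
    exact pick_inj e hne hxy
  · set x := e.symm (Sum.inr τ) with hx
    have he : e x = Sum.inr τ := e.apply_symm_apply _
    have h1 : pick e x ∈ plays (strOf (e x)) := (pick_spec e x).1
    rw [he] at h1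
    have h1' : pick e x ∈ plays τ := h1
    have h2 : pick e x ∉ pick e '' {z | strIdx (e z) = 1} := by
      have := hτ _ h1'
      simpa using this
    exact h2 ⟨x, by simp [he, strIdx], rfl⟩

end GS
end

section
/- The category 𝒞 of trees with isotone length-preserving maps has all small limits. -/
universe u

namespace GS
open CategoryTheory

/-- The category of trees: objects are pairs of a type and a tree on it. -/
structure TreeObj : Type (u + 1) where
  A : Type u
  T : Set (List A)
  isTree : IsTree T

/-- Morphisms of the category of trees: isotone, length-preserving maps. -/
@[ext] structure TreeObjHom (S T : TreeObj.{u}) where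
  toFun : {x // x ∈ S.T} → {x // x ∈ T.T}
  len : ∀ x, (toFun x).1.length = x.1.length
  mono : ∀ x y, x.1 <+: y.1 → (toFun x).1 <+: (toFun y).1

instance : Category.{u} TreeObj.{u} where
  Hom := TreeObjHom
  id S := ⟨_root_.id, fun _ => rfl, fun _ _ h => h⟩
  comp f g := ⟨fun x => g.toFun (f.toFun x), fun x => (g.len (f.toFun x)).trans (f.len x),
    fun x y h => g.mono (f.toFun x) (f.toFun y) (f.mono x y h)⟩
  id_comp f := rfl
  comp_id f := rfl
  assoc f g h := rfl

end GS


namespace GS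
open CategoryTheory Limits

section LimitConstruction

variable {J : Type u} [SmallCategory J] (F : J ⥤ TreeObj.{u})

/-- The carrier type of the limit tree. -/
def limA : Type u := ∀ j : J, (F.obj j).A

/-- Projection of a list of tuples to its `j`-th component list. -/
def projL (j : J) (x : List (limA F)) : List (F.obj j).A :=
  x.map (fun a => a j)

@[simp] lemma projL_length (j : J) (x : List (limA F)) :
    (projL F j x).length = x.length := List.length_map _

lemma projL_prefix (j : J) {x y : List (limA F)} (h : x <+: y) :
    projL F j x <+: projL F j y := h.map _

/-- The limit tree. -/
def limT : Set (List (limA F)) :=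
  {x | (∀ j : J, projL F j x ∈ (F.obj j).T) ∧
    ∀ (j j' : J) (f : j ⟶ j') (h : projL F j x ∈ (F.obj j).T),
      ((F.map f).toFun ⟨projL F j x, h⟩).1 = projL F j' x}

lemma limT_isTree : IsTree (limT F) := by
  rintro x y hxy ⟨hmem, hcomp⟩
  have hxm : ∀ j : J, projL F j x ∈ (F.obj j).T := fun j =>
    (F.obj j).isTree (projL_prefix F j hxy) (hmem j)
  refine ⟨hxm, fun j j' f h => ?_⟩
  have h1 : ((F.map f).toFun ⟨projL F j x, h⟩).1 <+: projL F j' y := by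
    have := (F.map f).mono ⟨projL F j x, h⟩ ⟨projL F j y, hmem j⟩ (projL_prefix F j hxy)
    rwa [hcomp j j' f (hmem j)] at this
  have h2 : projL F j' x <+: projL F j' y := projL_prefix F j' hxy
  have hlen : ((F.map f).toFun ⟨projL F j x, h⟩).1.length = (projL F j' x).length := by
    rw [(F.map f).len, projL_length, projL_length]
  exact List.IsPrefix.eq_of_length
    (List.prefix_of_prefix_length_le h1 h2 (le_of_eq hlen)) hlen

/-- The apex object of the limit cone. -/
def limObj : TreeObj.{u} := ⟨limA F, limT F, limT_isTree F⟩

/-- The projection morphisms of the limit cone. -/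
def limProj (j : J) : TreeObjHom (limObj F) (F.obj j) where
  toFun x := ⟨projL F j x.1, x.2.1 j⟩
  len x := projL_length F j x.1
  mono x y h := projL_prefix F j h

/-- The limit cone. -/
def limCone : Cone F where
  pt := limObj F
  π :=
    { app := limProj F
      naturality := by
        intro j j' f
        apply TreeObjHom.ext
        funext x
        exact Subtype.ext (x.2.2 j j' f (x.2.1 j)).symm }

/-- The lifting function for the limit cone. -/
def liftFun (s : Cone F) (x : {x // x ∈ s.pt.T}) : List (limA F) :=
  List.ofFn fun i : Fin x.1.length => fun j =>
    ((s.π.app j).toFun x).1.get (Fin.cast ((s.π.app j).len x).symm i)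

@[simp] lemma liftFun_length (s : Cone F) (x : {x // x ∈ s.pt.T}) :
    (liftFun F s x).length = x.1.length := List.length_ofFn

lemma projL_liftFun (s : Cone F) (j : J) (x : {x // x ∈ s.pt.T}) :
    projL F j (liftFun F s x) = ((s.π.app j).toFun x).1 := by
  apply List.ext_getElem
  · rw [projL_length, liftFun_length, (s.π.app j).len]
  · intro i h1 h2
    simp only [projL, liftFun, List.getElem_map, List.getElem_ofFn]
    exact congrFun (List.getElem_ofFn ..) j

lemma liftFun_mem (s : Cone F) (x : {x // x ∈ s.pt.T}) : liftFun F s x ∈ limT F := by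
  refine ⟨fun j => by rw [projL_liftFun]; exact ((s.π.app j).toFun x).2,
    fun j j' f h => ?_⟩
  have hnat : s.π.app j ≫ F.map f = s.π.app j' := (s.π.naturality f).symm.trans
    (Category.id_comp _)
  have : ((F.map f).toFun ((s.π.app j).toFun x)).1 = ((s.π.app j').toFun x).1 := by
    rw [← hnat]; rfl
  have harg : (⟨projL F j (liftFun F s x), h⟩ : {y // y ∈ (F.obj j).T}) =
      (s.π.app j).toFun x := Subtype.ext (projL_liftFun F s j x)
  rw [harg, this, projL_liftFun]

lemma liftFun_prefix (s : Cone F) (x y : {x // x ∈ s.pt.T}) (h : x.1 <+: y.1) :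
    liftFun F s x <+: liftFun F s y := by
  have hlen : x.1.length ≤ y.1.length := h.length_le
  rw [List.prefix_iff_eq_take]
  apply List.ext_getElem
  · simp [hlen]
  · intro i h1 h2
    rw [List.getElem_take]
    simp only [liftFun, List.getElem_ofFn]
    funext j
    have hpre : ((s.π.app j).toFun x).1 <+: ((s.π.app j).toFun y).1 :=
      (s.π.app j).mono x y h
    simp only [List.get_eq_getElem]
    refine (congrFun (List.getElem_ofFn.{u} ..) j).trans ((List.IsPrefix.getElem hpre _).trans ?_); exact Eq.symm (congrFun.{u+1, u+1} (List.getElem_ofFn.{u} ..) j)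

/-- The limit cone is a limit cone. -/
def limIsLimit : IsLimit (limCone F) where
  lift s := ⟨fun x => ⟨liftFun F s x, liftFun_mem F s x⟩,
    fun x => liftFun_length F s x, fun x y h => liftFun_prefix F s x y h⟩
  fac s j := by
    apply TreeObjHom.ext
    funext x
    exact Subtype.ext (projL_liftFun F s j x)
  uniq s m hm := by
    apply TreeObjHom.ext
    funext x
    apply Subtype.ext
    apply List.ext_getElem
    · rw [m.len]; exact (liftFun_length F s x).symm
    · intro i h1 h2
      funext j
      have hj : projL F j (m.toFun x).1 = ((s.π.app j).toFun x).1 := by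
        have := hm j; rw [← this]; rfl
      have hplen : i < (projL F j (m.toFun x).1).length := by
        exact lt_of_lt_of_eq h1 (projL_length F j _).symm
      have hslen : i < ((s.π.app j).toFun x).1.length := by
        rw [← hj]; exact hplen
      have step1 : (m.toFun x).1[i] j = (projL F j (m.toFun x).1)[i]'hplen := by
        simp only [projL, List.getElem_map]
        exact (List.getElem_map (fun a : limA F => a j)).symm
      have step2 : (projL F j (m.toFun x).1)[i]'hplen =
          ((s.π.app j).toFun x).1[i]'hslen := List.getElem_of_eq hj hplen
      have hL2 : i < (liftFun F s x).length := by
        rw [liftFun_length]; rw [m.len] at h1; exact h1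
      have step3 : ((liftFun F s x)[i]'hL2) j =
          ((s.π.app j).toFun x).1[i]'hslen := by
        simp only [liftFun, List.getElem_ofFn]
        exact congrFun (List.getElem_ofFn ..) j
      exact step1.trans (step2.trans step3.symm)

end LimitConstruction

end GS

namespace GS
/-- The category of trees has all small limits. -/
theorem treeCat_hasLimits : CategoryTheory.Limits.HasLimits TreeObj.{u} :=
  { has_limits_of_shape := fun _J _ =>
    { has_limit := fun F => CategoryTheory.Limits.HasLimit.mk
        ⟨limCone F, limIsLimit F⟩ } }
end GS
end

section
/- Clopen determinacy implies determinacy of unravelable games: if (T, P) is unravelable, then (T, P) is determined. -/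
universe u

namespace GS

variable {B : Type u}

/-- The length-`n` prefix of an infinite sequence, as a list. -/
def prefixOf (a : ℕ → B) (n : ℕ) : List B := List.ofFn fun j : Fin n => a j

lemma prefixOf_length (a : ℕ → B) (n : ℕ) : (prefixOf a n).length = n := by
  simp [prefixOf]

lemma prefixOf_succ (a : ℕ → B) (n : ℕ) :
    prefixOf a (n + 1) = prefixOf a n ++ [a n] := by
  unfold prefixOf
  rw [List.ofFn_succ', List.concat_eq_append]
  congr 1

lemma prefixOf_prefix (a : ℕ → B) {m n : ℕ} (h : m ≤ n) :
    prefixOf a m <+: prefixOf a n := by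
  induction n with
  | zero => simp_all
  | succ n ih =>
    rcases Nat.lt_or_ge m (n+1) with h' | h'
    · exact (ih (by omega)).trans (by rw [prefixOf_succ]; exact ⟨[a n], rfl⟩)
    · have : m = n + 1 := by omega
      subst this; exact List.prefix_rfl

lemma prefixOf_eq_iff (a b : ℕ → B) (n : ℕ) :
    prefixOf b n = prefixOf a n ↔ ∀ j < n, b j = a j := by
  constructor
  · intro h j hj
    have := congrArg (fun l => l.getD j (b j)) h
    simpa [prefixOf, List.getD_eq_getElem?_getD, hj] using this
  · intro h
    unfold prefixOf
    congr 1
    funext j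
    exact h j j.2

/-- All branches through `u` belong to `R`. -/
def Decided (S : Set (List B)) (R : Set (ℕ → B)) (u : List B) : Prop :=
  ∀ b ∈ body S, prefixOf b u.length = u → b ∈ R

lemma Decided.child {S : Set (List B)} {R : Set (ℕ → B)} {u : List B}
    (h : Decided S R u) (c : B) : Decided S R (u ++ [c]) := by
  intro b hb hpre
  apply h b hb
  have hlen : (u ++ [c]).length = u.length + 1 := by simp
  rw [hlen, prefixOf_succ] at hpre
  exact (List.append_inj' hpre rfl).1

/-- Positions from which the opponent of player `i` can force the play into the
region `R` (positions "bad" for player `i`). -/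
inductive Bad (S : Set (List B)) (R : Set (ℕ → B)) (i : ℕ) : List B → Prop
  | base (u : List B) : u ∈ S → Decided S R u → Bad S R i u
  | all (u : List B) : u ∈ S → u.length % 2 = i % 2 →
      (∀ c, u ++ [c] ∈ S → Bad S R i (u ++ [c])) → Bad S R i u
  | exist (u : List B) (c : B) : u ∈ S → ¬ (u.length % 2 = i % 2) →
      u ++ [c] ∈ S → Bad S R i (u ++ [c]) → Bad S R i u

section Chain

variable (S : Set (List B))

/-- A chain of extensions of a node in a pruned tree. -/
noncomputable def chain (hpr : IsPruned S) (x : {u // u ∈ S}) : ℕ → {u // u ∈ S}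
  | 0 => x
  | n + 1 =>
    ⟨(chain hpr x n).1 ++ [(hpr _ (chain hpr x n).2).choose],
      (hpr _ (chain hpr x n).2).choose_spec⟩

lemma chain_length (hpr : IsPruned S) (x : {u // u ∈ S}) (n : ℕ) :
    (chain S hpr x n).1.length = x.1.length + n := by
  induction n with
  | zero => rfl
  | succ n ih => simp [chain, ih]; omega

lemma chain_prefix (hpr : IsPruned S) (x : {u // u ∈ S}) {m n : ℕ} (h : m ≤ n) :
    (chain S hpr x m).1 <+: (chain S hpr x n).1 := by
  induction n with
  | zero => simp_all
  | succ n ih =>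
    rcases Nat.lt_or_ge m (n+1) with h' | h'
    · exact (ih (by omega)).trans ⟨_, rfl⟩
    · have : m = n + 1 := by omega
      subst this; exact List.prefix_rfl

lemma getD_of_prefix {u v : List B} (h : u <+: v) {k : ℕ} (hk : k < u.length) (d : B) :
    u.getD k d = v.getD k d := by
  obtain ⟨t, rfl⟩ := h
  rw [List.getD_append _ _ _ _ hk]

/-- Every node of a pruned tree lies on a branch. -/
lemma exists_branch (hT : IsTree S) (hpr : IsPruned S) {x : List B} (hx : x ∈ S) :
    ∃ b ∈ body S, prefixOf b x.length = x := by
  obtain ⟨d, -⟩ := hpr x hx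
  set ch : ℕ → {u // u ∈ S} := chain S hpr ⟨x, hx⟩ with hch
  refine ⟨fun k => (ch (k + 1)).1.getD k d, ?_, ?_⟩
  · -- body membership
    have key : ∀ n, prefixOf (fun k => (ch (k + 1)).1.getD k d) (x.length + n) = (ch n).1 := by
      intro n
      have hlen : (ch n).1.length = x.length + n := chain_length S hpr _ n
      apply List.ext_getElem (by simp [prefixOf, hlen])
      intro k h1 h2
      have hk1 : k < (ch (k+1)).1.length := by
        rw [chain_length S hpr _ (k+1)]; omega
      have hk2 : k < (ch n).1.length := h2
      have hup : (ch (min (k+1) n)).1 <+: (ch (max (k+1) n)).1 :=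
        chain_prefix S hpr _ (min_le_max)
      have e1 : (ch (k+1)).1.getD k d = (ch (max (k+1) n)).1.getD k d := by
        rcases le_total (k+1) n with h | h
        · exact getD_of_prefix (chain_prefix S hpr _ (le_max_left _ _)) hk1 d
        · rw [max_eq_left h]
      have e2 : (ch n).1.getD k d = (ch (max (k+1) n)).1.getD k d := by
        rcases le_total (k+1) n with h | h
        · rw [max_eq_right h]
        · exact getD_of_prefix (chain_prefix S hpr _ (le_max_right _ _)) hk2 d
      have : (ch (k+1)).1.getD k d = (ch n).1.getD k d := by rw [e1, e2]
      simp only [prefixOf, List.getElem_ofFn]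
      rw [List.getD_eq_getElem _ d hk2] at this
      exact this
    intro n
    have hpre : prefixOf (fun k => (ch (k + 1)).1.getD k d) n
        <+: prefixOf (fun k => (ch (k + 1)).1.getD k d) (x.length + n) :=
      prefixOf_prefix _ (by omega)
    exact hT hpre (key n ▸ (ch n).2)
  · have key0 : prefixOf (fun k => (ch (k + 1)).1.getD k d) (x.length + 0) = (ch 0).1 := by
      -- reuse the computation above via a local proof
      have hlen : (ch 0).1.length = x.length + 0 := chain_length S hpr _ 0
      apply List.ext_getElem (by simp [prefixOf, hlen])
      intro k h1 h2
      have hk1 : k < (ch (k+1)).1.length := by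
        rw [chain_length S hpr _ (k+1)]; omega
      have e1 : (ch (k+1)).1.getD k d = (ch 0).1.getD k d :=
        (getD_of_prefix (chain_prefix S hpr _ (Nat.zero_le _)) h2 d).symm
      simp only [prefixOf, List.getElem_ofFn]
      rw [List.getD_eq_getElem _ d h2] at e1
      exact e1
    exact key0

end Chain

lemma decided_not_bad {S : Set (List B)} (hT : IsTree S) (hpr : IsPruned S)
    {R₁ R₂ : Set (ℕ → B)} (hdisj : ∀ b, b ∈ R₁ → b ∈ R₂ → False)
    {i : ℕ} {x : List B} (hb : Bad S R₂ i x) : Decided S R₁ x → False := by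
  induction hb with
  | base u hu hdec2 =>
    intro hdec1
    obtain ⟨b, hb, hpre⟩ := exists_branch S hT hpr hu
    exact hdisj b (hdec1 b hb hpre) (hdec2 b hb hpre)
  | all u hu hpar hch ih =>
    intro hdec1
    obtain ⟨c, hc⟩ := hpr u hu
    exact ih c hc (hdec1.child c)
  | exist u c hu hpar hc hsub ih =>
    intro hdec1
    exact ih (hdec1.child c)

lemma not_bad_both {S : Set (List B)} (hT : IsTree S) (hpr : IsPruned S)
    {R₁ R₂ : Set (ℕ → B)} (hdisj : ∀ b, b ∈ R₁ → b ∈ R₂ → False)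
    {x : List B} (h0 : Bad S R₁ 0 x) : Bad S R₂ 1 x → False := by
  have hdisj' : ∀ b, b ∈ R₂ → b ∈ R₁ → False := fun b h2 h1 => hdisj b h1 h2
  induction h0 with
  | base u hu hdec =>
    intro h1
    exact decided_not_bad hT hpr hdisj h1 hdec
  | all u hu hpar hch ih =>
    intro h1
    cases h1 with
    | base _ hu' hdec =>
      exact decided_not_bad hT hpr hdisj' (Bad.all u hu hpar hch) hdec
    | all _ hu' hpar' hch' => omega
    | exist _ c hu' hpar' hc hsub => exact ih c hc hsub
  | exist u c hu hpar hc hsub ih =>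
    intro h1
    cases h1 with
    | base _ hu' hdec =>
      exact decided_not_bad hT hpr hdisj' (Bad.exist u c hu hpar hc hsub) hdec
    | all _ hu' hpar' hch' => exact ih (hch' c hc)
    | exist _ c' hu' hpar' hc' hsub' => omega

/-- The safety strategy: if the root is not bad for player `i`, then player `i` has a
strategy keeping the play out of the bad region forever. -/
lemma safety {S : Set (List B)} (hT : IsTree S) (hpr : IsPruned S) (hnil : [] ∈ S)
    {R : Set (ℕ → B)} {i : ℕ} (hroot : ¬ Bad S R i []) :
    ∃ σ : Strategy S i, ∀ a ∈ plays σ, ∀ n, ¬ Bad S R i (prefixOf a n) := by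
  obtain ⟨b0, -⟩ := hpr [] hnil
  classical
  refine ⟨⟨fun x =>
    if h : ∃ c, x ++ [c] ∈ S ∧ ¬ Bad S R i (x ++ [c]) then h.choose
    else if h2 : ∃ c, x ++ [c] ∈ S then h2.choose else b0, ?_⟩, ?_⟩
  · intro x hx hpar
    by_cases h : ∃ c, x ++ [c] ∈ S ∧ ¬ Bad S R i (x ++ [c])
    · simpa [dif_pos h] using h.choose_spec.1
    · have h2 : ∃ c, x ++ [c] ∈ S := hpr x hx
      simpa [dif_neg h, dif_pos h2] using h2.choose_spec
  · rintro a ⟨habody, hacons⟩ n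
    induction n with
    | zero => simpa [prefixOf] using hroot
    | succ n ih =>
      have hx : prefixOf a n ∈ S := habody n
      have hxlen : (prefixOf a n).length = n := prefixOf_length a n
      rw [prefixOf_succ]
      by_cases hn : n % 2 = i % 2
      · have hmove := hacons n hn
        have hex : ∃ c, prefixOf a n ++ [c] ∈ S ∧ ¬ Bad S R i (prefixOf a n ++ [c]) := by
          by_contra hno
          push_neg at hno
          exact ih (Bad.all _ hx (by omega) fun c hc => hno c hc)
        have : a n = hex.choose := by
          rw [hmove]; exact dif_pos hex
        rw [this]
        exact hex.choose_spec.2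
      · intro hbad
        have hc : prefixOf a n ++ [a n] ∈ S := by
          have := habody (n + 1)
          rwa [show (List.ofFn fun j : Fin (n+1) => a j) = prefixOf a n ++ [a n] from
            prefixOf_succ a n] at this
        exact ih (Bad.exist _ (a n) hx (by omega) hc hbad)

/-- Determinacy of clopen games (Gale–Stewart, easy case). -/
lemma clopen_det {B : Type u} (S : Set (List B)) (Q : Set (ℕ → B))
    (hT : IsTree S) (hpr : IsPruned S) (hne : S.Nonempty)
    (hcl : @IsClopen _ (bodyTop S) (Subtype.val ⁻¹' Q)) : Determined S Q := by
  classical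
  have hnil : [] ∈ S := hT (List.nil_prefix) hne.choose_spec
  -- relative openness extraction
  have hopen : ∀ D : Set (ℕ → B), @IsOpen _ (bodyTop S) (Subtype.val ⁻¹' D) →
      ∀ a ∈ body S, a ∈ D → ∃ n, Decided S D (prefixOf a n) := by
    intro D hD a ha haD
    rw [show bodyTop S = (seqTop B).induced Subtype.val from rfl,
      @isOpen_induced_iff _ _ (seqTop B) _ _] at hD
    obtain ⟨t, ht, hteq⟩ := hD
    have hat : a ∈ t := by
      have : (⟨a, ha⟩ : {a // a ∈ body S}) ∈ Subtype.val ⁻¹' t := by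
        rw [hteq]; exact haD
      exact this
    rw [show seqTop B = @Pi.topologicalSpace ℕ (fun _ => B) (fun _ => ⊥) from rfl,
      @isOpen_pi_iff ℕ (fun _ => B) (fun _ => ⊥)] at ht
    obtain ⟨I, u, h1, h2⟩ := ht a hat
    refine ⟨I.sup id + 1, ?_⟩
    intro b hb hpre
    rw [prefixOf_length, prefixOf_eq_iff] at hpre
    have hbt : b ∈ t := by
      apply h2
      intro j hj
      have hj' : j ∈ I := hj
      rw [hpre j (by have := Finset.le_sup (f := id) hj'; simp at this; omega)]
      exact (h1 j hj').2
    have : (⟨b, hb⟩ : {a // a ∈ body S}) ∈ Subtype.val ⁻¹' t := hbt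
    rw [hteq] at this
    exact this
  have hdisj : ∀ b : ℕ → B, b ∈ Qᶜ → b ∈ Q → False := fun b h1 h2 => h1 h2
  by_cases h0 : Bad S Qᶜ 0 []
  · -- player 1 wins
    have h1 : ¬ Bad S Q 1 [] := fun h1 => not_bad_both hT hpr hdisj h0 h1
    obtain ⟨σ, hσ⟩ := safety hT hpr hnil h1
    right
    refine ⟨σ, ?_⟩
    intro a ha
    simp only [Nat.one_mod, if_neg (by omega : ¬ (1 % 2 = 0))]
    intro haQ
    obtain ⟨n, hdec⟩ := hopen Q hcl.2 a ha.1 haQ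
    exact hσ a ha n (Bad.base _ (ha.1 n) hdec)
  · -- player 0 wins
    obtain ⟨σ, hσ⟩ := safety hT hpr hnil h0
    left
    refine ⟨σ, ?_⟩
    intro a ha
    simp only [if_pos (by omega : (0:ℕ) % 2 = 0)]
    by_contra haQ
    have hDopen : @IsOpen _ (bodyTop S) (Subtype.val ⁻¹' Qᶜ) := by
      rw [Set.preimage_compl]
      exact hcl.1.isOpen_compl
    obtain ⟨n, hdec⟩ := hopen Qᶜ hDopen a ha.1 haQ
    exact hσ a ha n (Bad.base _ (ha.1 n) hdec)

end GS

namespace GS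
/-- Unravelable games are determined. -/
theorem unravelable_determined {A : Type u} [Inhabited A] (T : Set (List A)) (P : Set (ℕ → A))
    (hT : IsTree T) (hpr : IsPruned T) (hne : T.Nonempty)
    (h : Unravelable T P) : Determined T P := by
  obtain ⟨B, S, c, hS, hSpr, hSne, hfix, hclopen⟩ := h 0
  have hdet : Determined S (bodyMap c.π.toFun ⁻¹' P) :=
    clopen_det S _ hS hSpr hSne hclopen
  rcases hdet with ⟨σ, hσ⟩ | ⟨σ, hσ⟩
  · left
    refine ⟨c.φ 0 σ, ?_⟩
    intro a ha
    obtain ⟨a', ha', heq⟩ := c.lift 0 σ a ha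
    have hwin := hσ a' ha'
    simp only [show (0:ℕ) % 2 = 0 from rfl, if_true] at hwin ⊢
    rw [← heq]; exact hwin
  · right
    refine ⟨c.φ 1 σ, ?_⟩
    intro a ha
    obtain ⟨a', ha', heq⟩ := c.lift 1 σ a ha
    have hwin := hσ a' ha'
    simp only [Nat.one_mod, if_neg (by omega : ¬ ((1:ℕ) % 2 = 0))] at hwin ⊢
    rw [← heq]; exact hwin
end GS
end
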